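/- arXiv:2410.05751 — 7 statements merged into one kernel-verified Lean document; each statement's English description precedes it below -/
import Mathlib

section
/- Let A and B be real symmetric positive semi-definite n×n matrices, with A positive definite. If ‖A^{-1/2}(B−A)A^{-1/2}‖_sp < 1, then B is positive definite and ‖A^{1/2}(A^{-1}−B^{-1})A^{1/2}‖_F ≤ ‖A^{-1/2}(B−A)A^{-1/2}‖_F / (1 − ‖A^{-1/2}(B−A)A^{-1/2}‖_sp). -/
noncomputable def frobNorm {n : ℕ} (A : Matrix (Fin n) (Fin n) ℝ) : ℝ :=
  Real.sqrt (∑ i, ∑ j, (A i j) ^ 2)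

noncomputable def spNorm {n : ℕ} (A : Matrix (Fin n) (Fin n) ℝ) : ℝ :=
  ‖Matrix.toEuclideanCLM (𝕜 := ℝ) A‖

/-- The old Mathlib `Matrix.PosSemidef.sqrt` (removed from Mathlib), with its old definition. -/
noncomputable def psdSqrt {n : ℕ} {A : Matrix (Fin n) (Fin n) ℝ} (hA : A.PosSemidef) :
    Matrix (Fin n) (Fin n) ℝ :=
  (hA.1.eigenvectorUnitary : Matrix (Fin n) (Fin n) ℝ) *
    Matrix.diagonal ((↑) ∘ Real.sqrt ∘ hA.1.eigenvalues) *
    (star (hA.1.eigenvectorUnitary : Matrix (Fin n) (Fin n) ℝ))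

/-! With `S = A^{1/2}` and `E = S⁻¹ (B - A) S⁻¹` one has `B = S (1 + E) S`, so `‖E‖_sp < 1` makes
`1 + E`, hence `B`, invertible, and an invertible positive semidefinite matrix is positive definite.
Moreover `S (A⁻¹ - B⁻¹) S = 1 - (1 + E)⁻¹ = (1 + E)⁻¹ E`, and the bound follows from
`‖X Y‖_F ≤ ‖X‖_sp ‖Y‖_F` together with the Neumann-series estimate
`‖(1 + E)⁻¹‖_sp ≤ (1 - ‖E‖_sp)⁻¹`. -/

open Matrix

lemma psdSqrt_mul_self {n : ℕ} {A : Matrix (Fin n) (Fin n) ℝ} (hA : A.PosSemidef) :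
    psdSqrt hA * psdSqrt hA = A := by
  have hD : diagonal (((↑) : ℝ → ℝ) ∘ Real.sqrt ∘ hA.1.eigenvalues) *
      diagonal (((↑) : ℝ → ℝ) ∘ Real.sqrt ∘ hA.1.eigenvalues) =
      diagonal (RCLike.ofReal ∘ hA.1.eigenvalues) := by
    simp [diagonal_mul_diagonal, Function.comp_def, Real.mul_self_sqrt (hA.eigenvalues_nonneg _)]
  conv_rhs => rw [hA.1.spectral_theorem, ← hD, map_mul]
  rfl

lemma norm_le_inv_one_sub_norm_of_one_add_mul_eq_one {R : Type*} [NormedRing R] {e c : R}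
    (h1 : ‖(1 : R)‖ ≤ 1) (he : ‖e‖ < 1) (hc : (1 + e) * c = 1) : ‖c‖ ≤ (1 - ‖e‖)⁻¹ := by
  have hc_le : ‖c‖ ≤ 1 + ‖e‖ * ‖c‖ :=
    calc ‖c‖ = ‖(1 + e) * c - e * c‖ := by noncomm_ring
      _ ≤ ‖(1 + e) * c‖ + ‖e * c‖ := norm_sub_le _ _
      _ ≤ 1 + ‖e‖ * ‖c‖ := by rw [hc]; gcongr; exact norm_mul_le _ _
  rw [← one_div, le_div_iff₀ (sub_pos.2 he)]
  linarith

section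
variable {n : ℕ}

lemma isUnit_one_add_of_spNorm_lt_one {E : Matrix (Fin n) (Fin n) ℝ} (hE : spNorm E < 1) :
    IsUnit (1 + E) := by
  have hunit : IsUnit (1 - toEuclideanCLM (𝕜 := ℝ) (-E)) :=
    isUnit_one_sub_of_norm_lt_one (by simpa [spNorm] using hE)
  rw [← map_one (toEuclideanCLM (n := Fin n) (𝕜 := ℝ)), ← map_sub, sub_neg_eq_add] at hunit
  exact (isUnit_map_iff _ _).1 hunit

lemma spNorm_inv_one_add_le {E : Matrix (Fin n) (Fin n) ℝ} (hE : spNorm E < 1) :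
    spNorm (1 + E)⁻¹ ≤ (1 - spNorm E)⁻¹ := by
  refine norm_le_inv_one_sub_norm_of_one_add_mul_eq_one ContinuousLinearMap.norm_id_le hE ?_
  rw [← map_one (toEuclideanCLM (n := Fin n) (𝕜 := ℝ)), ← map_add, ← map_mul,
    mul_nonsing_inv _ ((isUnit_iff_isUnit_det _).1 (isUnit_one_add_of_spNorm_lt_one hE))]

lemma sum_sq_mulVec_le (M : Matrix (Fin n) (Fin n) ℝ) (v : Fin n → ℝ) :
    ∑ i, (M *ᵥ v) i ^ 2 ≤ spNorm M ^ 2 * ∑ i, v i ^ 2 := by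
  have hle := (toEuclideanCLM (𝕜 := ℝ) M).le_opNorm (WithLp.toLp 2 v)
  rw [toEuclideanCLM_toLp] at hle
  simpa [mul_pow, EuclideanSpace.real_norm_sq_eq, spNorm] using
    pow_le_pow_left₀ (norm_nonneg _) hle 2

lemma frobNorm_mul_le (M N : Matrix (Fin n) (Fin n) ℝ) :
    frobNorm (M * N) ≤ spNorm M * frobNorm N := by
  rw [frobNorm, frobNorm, ← Real.sqrt_sq (show 0 ≤ spNorm M from norm_nonneg _),
    ← Real.sqrt_mul (sq_nonneg _)]
  refine Real.sqrt_le_sqrt ?_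
  rw [Finset.sum_comm, Finset.sum_comm (f := fun i j => N i j ^ 2), Finset.mul_sum]
  exact Finset.sum_le_sum fun j _ => sum_sq_mulVec_le M (fun i => N i j)

end

section
variable {m K : Type*} [Fintype m] [DecidableEq m] [CommRing K] {S A B : Matrix m m K}

lemma mul_one_add_conj_mul (hS : IsUnit S.det) (hSS : S * S = A) :
    S * (1 + S⁻¹ * (B - A) * S⁻¹) * S = B :=
  calc S * (1 + S⁻¹ * (B - A) * S⁻¹) * S = S * S + S * S⁻¹ * (B - A) * (S⁻¹ * S) := by
        noncomm_ring
    _ = B := by rw [mul_nonsing_inv S hS, nonsing_inv_mul S hS, hSS, one_mul, mul_one,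
        add_sub_cancel]

lemma mul_inv_sub_inv_mul_eq (hS : IsUnit S.det) (hSS : S * S = A) (hB : IsUnit B.det) :
    S * (A⁻¹ - B⁻¹) * S = (1 + S⁻¹ * (B - A) * S⁻¹)⁻¹ * (S⁻¹ * (B - A) * S⁻¹) := by
  set E := S⁻¹ * (B - A) * S⁻¹
  have hB_eq : S * (1 + E) * S = B := mul_one_add_conj_mul hS hSS
  have hE : IsUnit (1 + E).det := by
    rw [← hB_eq, det_mul, det_mul] at hB
    exact isUnit_of_mul_isUnit_right (isUnit_of_mul_isUnit_left hB)
  have hinv : S * B⁻¹ * S = (1 + E)⁻¹ :=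
    calc S * B⁻¹ * S = S * S⁻¹ * (1 + E)⁻¹ * (S⁻¹ * S) := by
          rw [← hB_eq, Matrix.mul_inv_rev, Matrix.mul_inv_rev]; noncomm_ring
      _ = (1 + E)⁻¹ := by rw [mul_nonsing_inv S hS, nonsing_inv_mul S hS, one_mul, mul_one]
  calc S * (A⁻¹ - B⁻¹) * S = S * S⁻¹ * (S⁻¹ * S) - S * B⁻¹ * S := by
        rw [← hSS, Matrix.mul_inv_rev]; noncomm_ring
    _ = (1 + E)⁻¹ * (1 + E) - (1 + E)⁻¹ := by
        rw [hinv, mul_nonsing_inv S hS, nonsing_inv_mul S hS, nonsing_inv_mul _ hE, one_mul]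
    _ = (1 + E)⁻¹ * E := by noncomm_ring

end

theorem stmt0 {n : ℕ} (A B : Matrix (Fin n) (Fin n) ℝ)
    (hA : A.PosDef) (hB : B.PosSemidef)
    (h : spNorm ((psdSqrt hA.posSemidef)⁻¹ * (B - A) * (psdSqrt hA.posSemidef)⁻¹) < 1) :
    B.PosDef ∧
      frobNorm (psdSqrt hA.posSemidef * (A⁻¹ - B⁻¹) * psdSqrt hA.posSemidef) ≤
        frobNorm ((psdSqrt hA.posSemidef)⁻¹ * (B - A) * (psdSqrt hA.posSemidef)⁻¹) /
          (1 - spNorm ((psdSqrt hA.posSemidef)⁻¹ * (B - A) * (psdSqrt hA.posSemidef)⁻¹)) := by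
  set S := psdSqrt hA.posSemidef
  set E := S⁻¹ * (B - A) * S⁻¹
  have hSS : S * S = A := psdSqrt_mul_self hA.posSemidef
  have hS : IsUnit S := isUnit_of_mul_isUnit_left (hSS ▸ hA.isUnit)
  have hS_det : IsUnit S.det := (isUnit_iff_isUnit_det S).1 hS
  have hB_unit : IsUnit B := by
    rw [← mul_one_add_conj_mul hS_det hSS (B := B)]
    exact (hS.mul (isUnit_one_add_of_spNorm_lt_one h)).mul hS
  refine ⟨hB.posDef_iff_isUnit.2 hB_unit, ?_⟩
  rw [mul_inv_sub_inv_mul_eq hS_det hSS ((isUnit_iff_isUnit_det B).1 hB_unit)]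
  calc frobNorm ((1 + E)⁻¹ * E) ≤ spNorm (1 + E)⁻¹ * frobNorm E := frobNorm_mul_le _ _
    _ ≤ (1 - spNorm E)⁻¹ * frobNorm E := by
        gcongr
        · exact Real.sqrt_nonneg _
        · exact spNorm_inv_one_add_le h
    _ = frobNorm E / (1 - spNorm E) := inv_mul_eq_div _ _
end

section
/- Let D be a nonzero real symmetric n×n matrix with eigenvalues λ_1,…,λ_n (with multiplicity). Then ∏_{j=1}^n (1 + 4λ_j^2)^{-1/4} ≤ (1 + 2‖D‖_F^2/n)^{-‖D‖_F^2/(8‖D‖_sp^2)}. -/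
theorem ConcaveOn.smul_le_apply_smul {E : Type*} [AddCommGroup E] [Module ℝ E] {s : Set E}
    {f : E → ℝ} (hf : ConcaveOn ℝ s f) (h0 : (0 : E) ∈ s) (hf0 : 0 ≤ f 0) {x : E} (hx : x ∈ s)
    {t : ℝ} (ht₀ : 0 ≤ t) (ht₁ : t ≤ 1) : t * f x ≤ f (t • x) := by
  have := hf.2 h0 hx (sub_nonneg.2 ht₁) ht₀ (sub_add_cancel 1 t)
  simp only [smul_zero, zero_add, smul_eq_mul] at this
  linarith [mul_nonneg (sub_nonneg.2 ht₁) hf0]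

theorem Real.div_mul_log_one_add_le {x a : ℝ} (hx : 0 ≤ x) (hxa : x ≤ a) :
    x / a * Real.log (1 + a) ≤ Real.log (1 + x) := by
  rcases (hx.trans hxa).eq_or_lt with rfl | ha
  · simp [le_antisymm hxa hx]
  have hconc := strictConcaveOn_log_Ioi.concaveOn.translate_right 1
  have := hconc.smul_le_apply_smul (by simp) (by simp) (x := a) (by simp; linarith)
    (div_nonneg hx ha.le) (div_le_one_of_le₀ hxa ha.le)
  simpa [div_mul_cancel₀ x ha.ne'] using this

theorem Real.sum_div_mul_log_one_add_le {ι : Type*} (s : Finset ι) {x : ι → ℝ} {a : ℝ}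
    (hx : ∀ i ∈ s, 0 ≤ x i) (hxa : ∀ i ∈ s, x i ≤ a) :
    (∑ i ∈ s, x i) / a * Real.log (1 + a) ≤ ∑ i ∈ s, Real.log (1 + x i) := by
  rw [Finset.sum_div, Finset.sum_mul]
  exact Finset.sum_le_sum fun i hi => Real.div_mul_log_one_add_le (hx i hi) (hxa i hi)

theorem Real.prod_one_add_four_sq_rpow_le {ι : Type*} [Fintype ι] (μ : ι → ℝ) {s : ℝ}
    (hμ : ∀ j, μ j ^ 2 ≤ s ^ 2) :
    ∏ j, (1 + 4 * μ j ^ 2) ^ (-(1 / 4 : ℝ)) ≤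
      (1 + 2 * (∑ j, μ j ^ 2) / Fintype.card ι) ^ (-(∑ j, μ j ^ 2) / (8 * s ^ 2)) := by
  set F := ∑ j, μ j ^ 2
  set L := ∑ j, Real.log (1 + 4 * μ j ^ 2)
  have hFn : F / Fintype.card ι ≤ s ^ 2 := by
    refine div_le_of_le_mul₀ (by positivity) (by positivity) ?_
    simpa [mul_comm] using Finset.sum_le_sum fun j (_ : j ∈ Finset.univ) => hμ j
  have hL : F / s ^ 2 * Real.log (1 + 4 * s ^ 2) ≤ L := by
    have := Real.sum_div_mul_log_one_add_le Finset.univ (x := fun j => 4 * μ j ^ 2)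
      (a := 4 * s ^ 2) (fun j _ => by positivity) (fun j _ => by linarith [hμ j])
    rwa [← Finset.mul_sum, mul_div_mul_left _ _ four_ne_zero] at this
  have hL_nonneg : 0 ≤ L :=
    Finset.sum_nonneg fun j _ => Real.log_nonneg (by nlinarith [sq_nonneg (μ j)])
  have key : F / (8 * s ^ 2) * Real.log (1 + 2 * F / Fintype.card ι) ≤ 1 / 4 * L :=
    calc F / (8 * s ^ 2) * Real.log (1 + 2 * F / Fintype.card ι)
        ≤ F / (8 * s ^ 2) * Real.log (1 + 4 * s ^ 2) := by
          gcongr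
          rw [mul_div_assoc]
          linarith [sq_nonneg s]
      _ = 1 / 8 * (F / s ^ 2 * Real.log (1 + 4 * s ^ 2)) := by ring
      _ ≤ 1 / 4 * L := by linarith
  rw [← Real.log_le_log_iff (by positivity) (by positivity),
    Real.log_prod fun j _ => by positivity, Real.log_rpow (by positivity),
    Finset.sum_congr rfl fun j _ => Real.log_rpow (by positivity) _, ← Finset.mul_sum, neg_div,
    neg_mul]
  linarith

namespace Matrix.IsHermitian

variable {𝕜 : Type*} [RCLike 𝕜] {ι : Type*} [Fintype ι] [DecidableEq ι] {A : Matrix ι ι 𝕜}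

theorem trace_mul_self_eq_sum_sq_eigenvalues (hA : A.IsHermitian) :
    (A * A).trace = ∑ i, (hA.eigenvalues i : 𝕜) ^ 2 := by
  conv_lhs => rw [hA.spectral_theorem]
  rw [← map_mul, diagonal_mul_diagonal, Unitary.conjStarAlgAut_apply,
    trace_mul_cycle, Unitary.coe_star_mul_self, one_mul, trace_diagonal]
  simp [sq]

theorem sum_norm_sq_eq_sum_sq_eigenvalues (hA : A.IsHermitian) :
    ∑ i, ∑ j, ‖A i j‖ ^ 2 = ∑ i, hA.eigenvalues i ^ 2 := by
  have h := hA.trace_mul_self_eq_sum_sq_eigenvalues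
  have hentry : ∀ i j, A i j * A j i = (‖A i j‖ ^ 2 : ℝ) := fun i j => by
    rw [← hA.apply j i, RCLike.star_def, RCLike.mul_conj, RCLike.ofReal_pow]
  simp only [trace, diag, mul_apply, hentry] at h
  exact_mod_cast h

theorem abs_eigenvalues_le_norm_toEuclideanCLM (hA : A.IsHermitian) (i : ι) :
    |hA.eigenvalues i| ≤ ‖toEuclideanCLM (𝕜 := 𝕜) A‖ := by
  have : Nonempty ι := ⟨i⟩
  have hmem : algebraMap ℝ 𝕜 (hA.eigenvalues i) ∈ spectrum 𝕜 (toEuclideanCLM (𝕜 := 𝕜) A) := by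
    rw [AlgEquiv.spectrum_eq (toEuclideanCLM (𝕜 := 𝕜) (n := ι)), spectrum.algebraMap_mem_iff]
    exact hA.eigenvalues_mem_spectrum_real i
  simpa using spectrum.norm_le_norm_of_mem hmem

end Matrix.IsHermitian

theorem stmt1_general {n : ℕ} (D : Matrix (Fin n) (Fin n) ℝ) (hD : D.IsHermitian) :
    ∏ j, (1 + 4 * hD.eigenvalues j ^ 2) ^ (-(1 / 4 : ℝ)) ≤
      (1 + 2 * frobNorm D ^ 2 / n) ^ (-(frobNorm D ^ 2) / (8 * spNorm D ^ 2)) := by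
  have hF : frobNorm D ^ 2 = ∑ j, hD.eigenvalues j ^ 2 := by
    rw [frobNorm, Real.sq_sqrt (by positivity)]
    simpa using hD.sum_norm_sq_eq_sum_sq_eigenvalues
  have hμ : ∀ j, hD.eigenvalues j ^ 2 ≤ spNorm D ^ 2 := fun j =>
    sq_le_sq.2 ((hD.abs_eigenvalues_le_norm_toEuclideanCLM j).trans (le_abs_self _))
  simpa [hF] using Real.prod_one_add_four_sq_rpow_le hD.eigenvalues hμ

theorem stmt1 {n : ℕ} (D : Matrix (Fin n) (Fin n) ℝ) (hD : D.IsHermitian) (hD0 : D ≠ 0) :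
    ∏ j, (1 + 4 * hD.eigenvalues j ^ 2) ^ (-(1 / 4 : ℝ)) ≤
      (1 + 2 * frobNorm D ^ 2 / n) ^ (-(frobNorm D ^ 2) / (8 * spNorm D ^ 2)) :=
  stmt1_general D hD
end

section
/- Let K ≥ 2 be an integer, n > 0 a real number, and a a real number with a > K/2 + 1. Then for every R ≥ 0, ∫_{{t ∈ ℝ^K : ‖t‖ ≥ R}} (1 + ‖t‖^2/n)^{-a} dt ≤ (nπ)^{K/2} · (1 + R^2/n)^{-a + K/2 + 1} / Γ(K/2), where ‖t‖ is the Euclidean norm, the integral is with respect to K-dimensional Lebesgue measure, and Γ is the gamma function. -/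
open MeasureTheory Set Filter Real

/-!
In polar coordinates the integral is `2 π ^ (K/2) / Γ(K/2) * ∫_R^∞ y ^ (K-1) (1 + y²/n) ^ (-a) dy`.
Bounding `y ^ (K-2) ≤ (n + y²) ^ (K/2 - 1)` turns the radial integrand into
`n ^ (K/2 - 1) * y (1 + y²/n) ^ (K/2 - a - 1)`, which has an explicit antiderivative. This gives
the sharper bound `(nπ) ^ (K/2) (1 + R²/n) ^ (K/2 - a) / ((a - K/2) Γ(K/2))`, and the claim
follows from `a - K/2 > 1` and `1 + R²/n ≥ 1`.
-/

section PolarCoordinates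

variable {E F : Type*} [NormedAddCommGroup E] [NormedSpace ℝ E] [FiniteDimensional ℝ E]
  [MeasurableSpace E] [BorelSpace E] [Nontrivial E] [NormedAddCommGroup F] [NormedSpace ℝ F]

theorem setIntegral_fun_norm_addHaar_le_norm (μ : Measure E) [μ.IsAddHaarMeasure] (f : ℝ → F)
    {R : ℝ} (hR : 0 ≤ R) :
    ∫ x in {x : E | R ≤ ‖x‖}, f ‖x‖ ∂μ =
      Module.finrank ℝ E • μ.real (Metric.ball 0 1) •
        ∫ y in Ioi R, y ^ (Module.finrank ℝ E - 1) • f y := by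
  have hIoi : (Ioi 0 ∩ Ici R : Set ℝ) =ᵐ[volume] (Ioi R : Set ℝ) := by
    rw [← inter_eq_right.mpr (Ioi_subset_Ioi hR)]
    exact (EventuallyEq.refl _ _).inter Ioi_ae_eq_Ici.symm
  rw [← integral_indicator (isClosed_le continuous_const continuous_norm).measurableSet]
  calc ∫ x, {x : E | R ≤ ‖x‖}.indicator (fun x => f ‖x‖) x ∂μ
      = ∫ x, (Ici R).indicator f ‖x‖ ∂μ := rfl
    _ = _ := by
        rw [integral_fun_norm_addHaar]
        simp_rw [← indicator_smul_apply (Ici R) (fun y : ℝ => y ^ (Module.finrank ℝ E - 1)) f]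
        rw [setIntegral_indicator measurableSet_Ici, setIntegral_congr_set hIoi]

theorem InnerProductSpace.finrank_mul_volume_real_ball_zero_one {E : Type*}
    [NormedAddCommGroup E] [InnerProductSpace ℝ E] [FiniteDimensional ℝ E]
    [MeasurableSpace E] [BorelSpace E] [Nontrivial E] :
    Module.finrank ℝ E * volume.real (Metric.ball (0 : E) 1) =
      2 * π ^ ((Module.finrank ℝ E : ℝ) / 2) / Gamma (Module.finrank ℝ E / 2) := by
  have hd : (0 : ℝ) < Module.finrank ℝ E := Nat.cast_pos.mpr Module.finrank_pos
  rw [measureReal_def, InnerProductSpace.volume_ball, ENNReal.ofReal_one, one_pow, one_mul,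
    ENNReal.toReal_ofReal (by positivity), Gamma_add_one (by positivity), sqrt_eq_rpow,
    ← rpow_natCast, ← rpow_mul pi_pos.le]
  field_simp

end PolarCoordinates

section RadialIntegral

variable {n c : ℝ}

theorem hasDerivAt_one_add_sq_div_rpow (hn : 0 < n) (hc : c ≠ 0) (y : ℝ) :
    HasDerivAt (fun y : ℝ => -(n / (2 * c)) * (1 + y ^ 2 / n) ^ (-c))
      (y * (1 + y ^ 2 / n) ^ (-c - 1)) y := by
  have hinner : HasDerivAt (fun y : ℝ => 1 + y ^ 2 / n) (2 * y / n) y := by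
    simpa using ((hasDerivAt_pow 2 y).div_const n).const_add 1
  have hpos : 0 < 1 + y ^ 2 / n := by positivity
  refine ((hinner.rpow_const (p := -c) (Or.inl hpos.ne')).const_mul _).congr_deriv ?_
  field_simp

theorem tendsto_one_add_sq_div_rpow_neg_atTop (hn : 0 < n) (hc : 0 < c) :
    Tendsto (fun y : ℝ => (1 + y ^ 2 / n) ^ (-c)) atTop (nhds 0) :=
  (tendsto_rpow_neg_atTop hc).comp <| tendsto_atTop_add_const_left _ 1 <|
    (tendsto_pow_atTop two_ne_zero).atTop_div_const hn

theorem integrableOn_Ioi_mul_one_add_sq_div_rpow (hn : 0 < n) (hc : 0 < c) {R : ℝ} (hR : 0 ≤ R) :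
    IntegrableOn (fun y => y * (1 + y ^ 2 / n) ^ (-c - 1)) (Ioi R) := by
  refine integrableOn_Ioi_deriv_of_nonneg' (fun y _ => hasDerivAt_one_add_sq_div_rpow hn hc.ne' y)
    (fun y hy => ?_) ((tendsto_one_add_sq_div_rpow_neg_atTop hn hc).const_mul _)
  have : 0 ≤ y := hR.trans hy.le
  positivity

theorem integral_Ioi_mul_one_add_sq_div_rpow (hn : 0 < n) (hc : 0 < c) {R : ℝ} (hR : 0 ≤ R) :
    ∫ y in Ioi R, y * (1 + y ^ 2 / n) ^ (-c - 1) = n / (2 * c) * (1 + R ^ 2 / n) ^ (-c) := by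
  rw [integral_Ioi_of_hasDerivAt_of_nonneg' (fun y _ => hasDerivAt_one_add_sq_div_rpow hn hc.ne' y)
    (fun y hy => ?_) ((tendsto_one_add_sq_div_rpow_neg_atTop hn hc).const_mul _)]
  · ring
  · have : 0 ≤ y := hR.trans hy.le
    positivity

end RadialIntegral

theorem pow_le_rpow_mul_one_add_sq_div {n y : ℝ} (hn : 0 < n) (hy : 0 ≤ y) {K : ℕ} (hK : 2 ≤ K) :
    y ^ (K - 2) ≤ n ^ ((K : ℝ) / 2 - 1) * (1 + y ^ 2 / n) ^ ((K : ℝ) / 2 - 1) := by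
  have he : 0 ≤ (K : ℝ) / 2 - 1 := by
    have : (2 : ℝ) ≤ K := by exact_mod_cast hK
    linarith
  calc y ^ (K - 2) = (y ^ 2) ^ ((K : ℝ) / 2 - 1) := by
        rw [← rpow_natCast, ← rpow_two, ← rpow_mul hy, Nat.cast_sub hK]
        ring_nf
    _ ≤ (n * (1 + y ^ 2 / n)) ^ ((K : ℝ) / 2 - 1) := by
        gcongr
        field_simp
        linarith
    _ = _ := mul_rpow hn.le (by positivity)

theorem integral_Ioi_pow_mul_one_add_sq_div_rpow_le {K : ℕ} (hK : 2 ≤ K) {n a R : ℝ} (hn : 0 < n)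
    (ha : (K : ℝ) / 2 < a) (hR : 0 ≤ R) :
    ∫ y in Ioi R, y ^ (K - 1) * (1 + y ^ 2 / n) ^ (-a) ≤
      n ^ ((K : ℝ) / 2) / (2 * (a - K / 2)) * (1 + R ^ 2 / n) ^ ((K : ℝ) / 2 - a) := by
  set c := a - (K : ℝ) / 2
  have hc : 0 < c := sub_pos.mpr ha
  have hbound : ∀ y ∈ Ioi R, y ^ (K - 1) * (1 + y ^ 2 / n) ^ (-a) ≤
      n ^ ((K : ℝ) / 2 - 1) * (y * (1 + y ^ 2 / n) ^ (-c - 1)) := by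
    intro y hy
    have hy : 0 ≤ y := hR.trans (le_of_lt hy)
    have hu : 0 < 1 + y ^ 2 / n := by positivity
    calc y ^ (K - 1) * (1 + y ^ 2 / n) ^ (-a)
        = y ^ (K - 2) * (y * (1 + y ^ 2 / n) ^ (-a)) := by
          rw [show K - 1 = K - 2 + 1 by omega, pow_succ, mul_assoc]
      _ ≤ n ^ ((K : ℝ) / 2 - 1) * (1 + y ^ 2 / n) ^ ((K : ℝ) / 2 - 1) *
          (y * (1 + y ^ 2 / n) ^ (-a)) := by
          gcongr
          exact pow_le_rpow_mul_one_add_sq_div hn hy hK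
      _ = n ^ ((K : ℝ) / 2 - 1) * (y * (1 + y ^ 2 / n) ^ (-c - 1)) := by
          rw [show -c - 1 = ((K : ℝ) / 2 - 1) + -a by ring, rpow_add hu]
          ring
  calc ∫ y in Ioi R, y ^ (K - 1) * (1 + y ^ 2 / n) ^ (-a)
      ≤ ∫ y in Ioi R, n ^ ((K : ℝ) / 2 - 1) * (y * (1 + y ^ 2 / n) ^ (-c - 1)) := by
        refine integral_mono_of_nonneg ?_
          ((integrableOn_Ioi_mul_one_add_sq_div_rpow hn hc hR).const_mul _) ?_
        · filter_upwards [ae_restrict_mem measurableSet_Ioi] with y hy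
          have : 0 ≤ y := hR.trans (le_of_lt hy)
          positivity
        · filter_upwards [ae_restrict_mem measurableSet_Ioi] with y hy
          exact hbound y hy
    _ = n ^ ((K : ℝ) / 2) / (2 * c) * (1 + R ^ 2 / n) ^ ((K : ℝ) / 2 - a) := by
        have hpow : n ^ ((K : ℝ) / 2) = n ^ ((K : ℝ) / 2 - 1) * n := by
          rw [← rpow_add_one hn.ne', sub_add_cancel]
        rw [integral_const_mul, integral_Ioi_mul_one_add_sq_div_rpow hn hc hR, hpow,
          show -c = (K : ℝ) / 2 - a by ring]
        ring

theorem stmt2 (K : ℕ) (hK : 2 ≤ K) (n : ℝ) (hn : 0 < n) (a : ℝ) (ha : K / 2 + 1 < a)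
    (R : ℝ) (hR : 0 ≤ R) :
    ∫ t in {t : EuclideanSpace ℝ (Fin K) | R ≤ ‖t‖}, (1 + ‖t‖ ^ 2 / n) ^ (-a) ∂volume ≤
      (n * Real.pi) ^ ((K : ℝ) / 2) * (1 + R ^ 2 / n) ^ (-a + K / 2 + 1) /
        Real.Gamma (K / 2) := by
  have : Nonempty (Fin K) := ⟨⟨0, by omega⟩⟩
  have hvol := InnerProductSpace.finrank_mul_volume_real_ball_zero_one
    (E := EuclideanSpace ℝ (Fin K))
  rw [finrank_euclideanSpace_fin] at hvol
  have hu : 1 ≤ 1 + R ^ 2 / n := le_add_of_nonneg_right (by positivity)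
  rw [setIntegral_fun_norm_addHaar_le_norm volume (fun y => (1 + y ^ 2 / n) ^ (-a)) hR,
    finrank_euclideanSpace_fin, nsmul_eq_mul, smul_eq_mul, ← mul_assoc, hvol]
  simp_rw [smul_eq_mul]
  calc 2 * π ^ ((K : ℝ) / 2) / Gamma (K / 2) *
        ∫ y in Ioi R, y ^ (K - 1) * (1 + y ^ 2 / n) ^ (-a)
      ≤ 2 * π ^ ((K : ℝ) / 2) / Gamma (K / 2) *
        (n ^ ((K : ℝ) / 2) / (2 * (a - K / 2)) * (1 + R ^ 2 / n) ^ ((K : ℝ) / 2 - a)) := by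
        gcongr
        exact integral_Ioi_pow_mul_one_add_sq_div_rpow_le hK hn (by linarith) hR
    _ = (n * π) ^ ((K : ℝ) / 2) * ((1 + R ^ 2 / n) ^ ((K : ℝ) / 2 - a) / (a - K / 2)) /
        Gamma (K / 2) := by
        rw [mul_rpow hn.le pi_pos.le]
        field_simp
    _ ≤ (n * π) ^ ((K : ℝ) / 2) * (1 + R ^ 2 / n) ^ (-a + K / 2 + 1) / Gamma (K / 2) := by
        gcongr
        calc (1 + R ^ 2 / n) ^ ((K : ℝ) / 2 - a) / (a - K / 2)
            ≤ (1 + R ^ 2 / n) ^ ((K : ℝ) / 2 - a) :=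
              div_le_self (by positivity) (by linarith)
          _ ≤ (1 + R ^ 2 / n) ^ (-a + K / 2 + 1) := rpow_le_rpow_of_exponent_le hu (by linarith)
end

section
/- Let X be a standard Gaussian random vector in ℝ^n (independent N(0,1) components) and let D be a real symmetric n×n matrix with eigenvalues λ_1,…,λ_n (with multiplicity). Then E[exp(i·X^⊤ D X)] = ∏_{j=1}^n (1 − 2iλ_j)^{-1/2}, where for each j, (1 − 2iλ_j)^{-1/2} = exp(−(1/2)·Log(1 − 2iλ_j)) with Log the principal branch of the complex logarithm. -/
/-!
Diagonalise `D = U diag(λ) Uᵀ` with `U` orthogonal. The standard Gaussian is rotation invariant,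
so the coordinates of `X` in the eigenbasis of `D` are again independent `N(0,1)` variables `Yⱼ`,
and `Xᵀ D X = ∑ⱼ λⱼ Yⱼ²`. The expectation therefore factors into one-dimensional integrals
`E[exp(z Y²)] = (2π)^(-1/2) ∫ exp(-(1 - 2z) t² / 2) dt = (1 - 2z)^(-1/2)` for `Re z < 1/2`,
evaluated at `z = i λⱼ`.
-/

open MeasureTheory ProbabilityTheory Matrix Complex
open scoped Real

theorem inv_sqrt_two_pi_mul_cpow_div_two {w : ℂ} (hw : 0 < w.re) :
    ((√(2 * π))⁻¹ : ℝ) * ((π : ℂ) / (w / 2)) ^ (1 / 2 : ℂ) = cexp (-(1 / 2) * log w) := by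
  have hw0 : w ≠ 0 := by rintro rfl; simp at hw
  have h2π : (0 : ℝ) < 2 * π := by positivity
  have hdiv : (π : ℂ) / (w / 2) = ((2 * π : ℝ) : ℂ) * w⁻¹ := by push_cast; field_simp
  have hlog : log ((π : ℂ) / (w / 2)) = Real.log (2 * π) - log w := by
    rw [hdiv, log_ofReal_mul h2π (inv_ne_zero hw0), log_inv w, sub_eq_add_neg]
    exact (arg_lt_pi_iff.2 (Or.inl hw.le)).ne
  have hsqrt : (((√(2 * π))⁻¹ : ℝ) : ℂ) = cexp (-(1 / 2) * Real.log (2 * π)) := by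
    rw [Real.sqrt_eq_rpow, ← Real.rpow_neg h2π.le, Real.rpow_def_of_pos h2π]
    push_cast
    ring_nf
  have hne : (π : ℂ) / (w / 2) ≠ 0 := by
    rw [hdiv]
    exact mul_ne_zero (ofReal_ne_zero.2 h2π.ne') (inv_ne_zero hw0)
  rw [cpow_def_of_ne_zero hne, hlog, hsqrt, ← Complex.exp_add]
  ring_nf

/-- The complex moment generating function of `χ²₁`. -/
theorem integral_cexp_mul_sq_gaussianReal {z : ℂ} (hz : z.re < 1 / 2) :
    ∫ t, cexp (z * t ^ 2) ∂gaussianReal 0 1 = cexp (-(1 / 2) * log (1 - 2 * z)) := by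
  have hre : 0 < (1 - 2 * z).re := by simp; linarith
  calc ∫ t, cexp (z * t ^ 2) ∂gaussianReal 0 1
      = ∫ t : ℝ, ((√(2 * π))⁻¹ : ℝ) * cexp (-((1 - 2 * z) / 2) * t ^ 2) := by
        rw [integral_gaussianReal_eq_integral_smul one_ne_zero]
        refine integral_congr_ae (Filter.Eventually.of_forall fun t => ?_)
        simp only [gaussianPDFReal, NNReal.coe_one, mul_one, sub_zero, real_smul, ofReal_mul,
          ofReal_exp, mul_assoc, ← Complex.exp_add]
        congr 2
        push_cast
        ring
    _ = ((√(2 * π))⁻¹ : ℝ) * ((π : ℂ) / ((1 - 2 * z) / 2)) ^ (1 / 2 : ℂ) := by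
        rw [integral_const_mul, integral_gaussian_complex (by simpa using hre)]
    _ = cexp (-(1 / 2) * log (1 - 2 * z)) := inv_sqrt_two_pi_mul_cpow_div_two hre

section StdGaussian

variable {ι : Type*} [Fintype ι] {E : Type*} [NormedAddCommGroup E] [InnerProductSpace ℝ E]
  [FiniteDimensional ℝ E] [MeasurableSpace E] [BorelSpace E]
  {F : Type*} [NormedAddCommGroup F] [NormedSpace ℝ F]

theorem integral_stdGaussian_eq_integral_pi_orthonormalBasis (b : OrthonormalBasis ι ℝ E)
    (f : E → F) :
    ∫ y, f y ∂stdGaussian E = ∫ x, f (∑ i, x i • b i) ∂Measure.pi fun _ : ι ↦ gaussianReal 0 1 := by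
  have hb : MeasurableEmbedding fun x : ι → ℝ ↦ ∑ i, x i • b i := by
    convert b.toBasis.equivFun.symm.toContinuousLinearEquiv.toHomeomorph.measurableEmbedding
    exact b.sum_repr_symm _
  rw [stdGaussian_eq_map_pi_orthonormalBasis b, hb.integral_map]

end StdGaussian

section EigenvectorCoordinates

variable {ι : Type*} [Fintype ι] [DecidableEq ι]

theorem EuclideanSpace.ofLp_sum_smul_basisFun {𝕜 : Type*} [RCLike 𝕜]
    (x : ι → 𝕜) : WithLp.ofLp (∑ i, x i • EuclideanSpace.basisFun ι 𝕜 i) = x := by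
  ext i
  simp [EuclideanSpace.basisFun_apply, Pi.single_apply]

theorem Matrix.IsHermitian.ofLp_sum_smul_eigenvectorBasis {𝕜 : Type*} [RCLike 𝕜]
    {A : Matrix ι ι 𝕜} (hA : A.IsHermitian) (x : ι → 𝕜) :
    WithLp.ofLp (∑ i, x i • hA.eigenvectorBasis i) =
      (hA.eigenvectorUnitary : Matrix ι ι 𝕜) *ᵥ x := by
  ext j
  simp [mulVec, dotProduct, mul_comm]

theorem Matrix.IsHermitian.dotProduct_mulVec_eigenvectorUnitary_mulVec {A : Matrix ι ι ℝ}
    (hA : A.IsHermitian) (x : ι → ℝ) :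
    let U : Matrix ι ι ℝ := hA.eigenvectorUnitary
    (U *ᵥ x) ⬝ᵥ A *ᵥ (U *ᵥ x) = ∑ i, hA.eigenvalues i * x i ^ 2 := by
  intro U
  have hdiag : Uᵀ * A * U = diagonal hA.eigenvalues := by
    simpa [Unitary.conjStarAlgAut_star_apply, U, star_eq_conjTranspose,
      conjTranspose_eq_transpose_of_trivial] using hA.conjStarAlgAut_star_eigenvectorUnitary
  calc (U *ᵥ x) ⬝ᵥ A *ᵥ (U *ᵥ x) = x ⬝ᵥ (Uᵀ * A * U) *ᵥ x := by
        rw [Matrix.mul_assoc, ← mulVec_mulVec, dotProduct_mulVec x, vecMul_transpose,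
          mulVec_mulVec]
    _ = ∑ i, hA.eigenvalues i * x i ^ 2 := by
        simp only [hdiag, dotProduct, mulVec_diagonal]
        exact Finset.sum_congr rfl fun i _ => by ring

end EigenvectorCoordinates

theorem stmt8 {n : ℕ} (D : Matrix (Fin n) (Fin n) ℝ) (hD : D.IsHermitian) :
    ∫ x : Fin n → ℝ, Complex.exp (Complex.I * ((x ⬝ᵥ (D *ᵥ x) : ℝ) : ℂ))
        ∂(Measure.pi fun _ => gaussianReal 0 1)
      = ∏ j, Complex.exp (-(1 / 2 : ℂ) *
          Complex.log (1 - 2 * Complex.I * (hD.eigenvalues j : ℂ))) := by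
  calc ∫ x : Fin n → ℝ, cexp (I * ((x ⬝ᵥ (D *ᵥ x) : ℝ) : ℂ)) ∂(Measure.pi fun _ => gaussianReal 0 1)
      = ∫ y, cexp (I * ((WithLp.ofLp y ⬝ᵥ D *ᵥ WithLp.ofLp y : ℝ) : ℂ))
          ∂stdGaussian (EuclideanSpace ℝ (Fin n)) := by
        simp_rw [integral_stdGaussian_eq_integral_pi_orthonormalBasis (EuclideanSpace.basisFun _ ℝ),
          EuclideanSpace.ofLp_sum_smul_basisFun]
    _ = ∫ x : Fin n → ℝ, ∏ j, cexp (I * hD.eigenvalues j * x j ^ 2)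
          ∂(Measure.pi fun _ => gaussianReal 0 1) := by
        simp_rw [integral_stdGaussian_eq_integral_pi_orthonormalBasis hD.eigenvectorBasis,
          hD.ofLp_sum_smul_eigenvectorBasis, hD.dotProduct_mulVec_eigenvectorUnitary_mulVec,
          ← Complex.exp_sum]
        push_cast
        simp_rw [Finset.mul_sum, mul_assoc]
    _ = ∏ j, ∫ t, cexp (I * hD.eigenvalues j * t ^ 2) ∂gaussianReal 0 1 :=
        integral_fintype_prod_eq_prod fun j (t : ℝ) => cexp (I * hD.eigenvalues j * t ^ 2)
    _ = ∏ j, cexp (-(1 / 2 : ℂ) * log (1 - 2 * I * (hD.eigenvalues j : ℂ))) := by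
        refine Finset.prod_congr rfl fun j _ => ?_
        rw [integral_cexp_mul_sq_gaussianReal (by simp), mul_assoc 2]
end

section
/- Let C be a real symmetric positive definite n×n matrix and let M_1,…,M_K be real symmetric n×n matrices that are orthonormal with respect to the Frobenius inner product (⟨M_k, M_{k'}⟩_F = 1{k = k'}). Define the K×K matrix Γ by Γ_{k,k'} = 2·tr(M_k C^{-1} M_{k'} C^{-1}). Then for every t ∈ ℝ^K, t^⊤ Γ t ≥ 2‖C‖_sp^{-2}·‖t‖^2; in particular Γ is symmetric positive definite. -/
open Matrix

/-!
Put `S = C⁻¹` and `T = ∑ₖ tₖ Mₖ`. Then `tᵀ Γ t = 2 tr(TSTS)` and, by orthonormality,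
`‖t‖² = tr(TTᵀ) = tr(T²)`. The spectrum of `C` lies in `(0, ‖C‖]`, so `S ≥ c • 1` in the Loewner
order with `c = ‖C‖⁻¹`. Since the trace of a product of two positive semidefinite matrices is
nonnegative, `tr(TSTS) ≥ c tr(TST) ≥ c² tr(T²)`.
-/

open scoped MatrixOrder Matrix.Norms.L2Operator

namespace Matrix

lemma dotProduct_mulVec_of_bilin {R E κ : Type*} [CommSemiring R] [AddCommMonoid E] [Module R E]
    [Fintype κ] (B : E →ₗ[R] E →ₗ[R] R) (v : κ → E) (t : κ → R) :
    t ⬝ᵥ (of (fun k k' => B (v k) (v k')) *ᵥ t) = B (∑ k, t k • v k) (∑ k, t k • v k) := by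
  simp only [dotProduct, mulVec, of_apply, map_sum, map_smul, LinearMap.sum_apply,
    LinearMap.smul_apply, smul_eq_mul, Finset.mul_sum]
  rw [Finset.sum_comm]
  exact Finset.sum_congr rfl fun k _ => Finset.sum_congr rfl fun k' _ => by ring

variable {ι κ : Type*} [Fintype ι]

lemma IsSymm.trace_mul_mul_mul_mul_comm {R : Type*} [CommRing R] {A B S : Matrix ι ι R}
    (hA : A.IsSymm) (hB : B.IsSymm) (hS : S.IsSymm) :
    trace (A * S * B * S) = trace (B * S * A * S) := by
  rw [← trace_transpose]
  simp only [transpose_mul, hA.eq, hB.eq, hS.eq]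
  rw [trace_mul_comm]
  simp only [Matrix.mul_assoc]

def traceGram (S : Matrix ι ι ℝ) (M : κ → Matrix ι ι ℝ) : Matrix κ κ ℝ :=
  of fun k k' => 2 * trace (M k * S * M k' * S)

lemma isHermitian_traceGram {S : Matrix ι ι ℝ} (hS : S.IsSymm) {M : κ → Matrix ι ι ℝ}
    (hM : ∀ k, (M k).IsSymm) : (traceGram S M).IsHermitian := by
  ext k k'
  simp [traceGram, (hM k).trace_mul_mul_mul_mul_comm (hM k') hS]

section Fintype

variable [Fintype κ]

lemma dotProduct_traceGram_mulVec (S : Matrix ι ι ℝ) (M : κ → Matrix ι ι ℝ) (t : κ → ℝ) :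
    t ⬝ᵥ (traceGram S M *ᵥ t) = 2 * trace ((∑ k, t k • M k) * S * (∑ k, t k • M k) * S) :=
  dotProduct_mulVec_of_bilin (LinearMap.mk₂ ℝ (fun X Y => 2 * trace (X * S * Y * S))
    (by intros; simp [Matrix.add_mul, mul_add]) (by intros; simp [mul_left_comm])
    (by intros; simp [Matrix.add_mul, mul_add]) (by intros; simp [mul_left_comm])) M t

lemma sum_sq_eq_trace_mul_transpose [DecidableEq κ] {M : κ → Matrix ι ι ℝ}
    (horth : ∀ k k', trace (M k * (M k')ᵀ) = if k = k' then 1 else 0) (t : κ → ℝ) :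
    ∑ k, t k ^ 2 = trace ((∑ k, t k • M k) * (∑ k, t k • M k)ᵀ) := by
  have hgram : (of fun k k' => trace (M k * (M k')ᵀ)) = 1 := by
    ext k k'; simp [horth, one_apply]
  have := dotProduct_mulVec_of_bilin (LinearMap.mk₂ ℝ (fun X Y : Matrix ι ι ℝ => trace (X * Yᵀ))
    (by intros; simp [Matrix.add_mul]) (by intros; simp)
    (by intros; simp [Matrix.mul_add]) (by intros; simp)) M t
  simp only [LinearMap.mk₂_apply, hgram, one_mulVec, dotProduct] at this
  simpa [sq] using this

end Fintype

variable [DecidableEq ι]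

lemma trace_mul_nonneg {A B : Matrix ι ι ℝ} (hA : 0 ≤ A) (hB : 0 ≤ B) : 0 ≤ (A * B).trace := by
  rw [← CFC.sqrt_mul_sqrt_self A, Matrix.mul_assoc, trace_mul_comm]
  have := star_left_conjugate_nonneg hB (CFC.sqrt A)
  rw [(CFC.sqrt_nonneg A).isSelfAdjoint.star_eq] at this
  exact (nonneg_iff_posSemidef.mp this).trace_nonneg

lemma sq_mul_trace_mul_self_le_trace_mul_mul_mul_mul {S T : Matrix ι ι ℝ} {c : ℝ} (hc : 0 ≤ c)
    (hS : c • 1 ≤ S) (hT : IsSelfAdjoint T) :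
    c ^ 2 * (T * T).trace ≤ (T * S * T * S).trace := by
  have hSc : 0 ≤ S - c • 1 := sub_nonneg.mpr hS
  have hS₀ : 0 ≤ S := (smul_nonneg hc zero_le_one).trans hS
  have conj : ∀ {X : Matrix ι ι ℝ}, 0 ≤ X → 0 ≤ T * X * T := fun hX => by
    simpa [hT.star_eq] using star_left_conjugate_nonneg hX T
  have h₁ : 0 ≤ (T * S * T * (S - c • 1)).trace := trace_mul_nonneg (conj hS₀) hSc
  have h₂ : 0 ≤ (T * (S - c • 1) * T).trace := (nonneg_iff_posSemidef.mp (conj hSc)).trace_nonneg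
  simp only [Matrix.mul_sub, Matrix.sub_mul, mul_smul_comm, smul_mul_assoc, Matrix.mul_one,
    trace_sub, trace_smul, smul_eq_mul] at h₁ h₂
  linarith [mul_nonneg hc h₂]

lemma PosDef.inv_norm_smul_one_le_inv {C : Matrix ι ι ℝ} (hC : C.PosDef) :
    ‖C‖⁻¹ • (1 : Matrix ι ι ℝ) ≤ C⁻¹ := by
  cases isEmpty_or_nonempty ι
  · exact (Subsingleton.elim _ _).le
  have : IsSelfAdjoint C⁻¹ := hC.inv.isHermitian
  rw [← Algebra.algebraMap_eq_smul_one, algebraMap_le_iff_le_spectrum]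
  intro r hr
  obtain ⟨u, rfl⟩ := hC.isUnit
  rw [← coe_units_inv, ← spectrum.map_inv, Set.mem_inv] at hr
  have hr₀ : 0 < r⁻¹ := (isStrictlyPositive_iff_posDef.mpr hC).spectrum_pos hr
  have hle : r⁻¹ ≤ ‖(u : Matrix ι ι ℝ)‖ := by
    simpa [abs_of_pos (inv_pos.mp hr₀)] using spectrum.norm_le_norm_of_mem hr
  exact inv_le_of_inv_le₀ (inv_pos.mp hr₀) hle

variable [Fintype κ] [DecidableEq κ]

lemma two_mul_sum_sq_div_norm_sq_le {C : Matrix ι ι ℝ} (hC : C.PosDef)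
    {M : κ → Matrix ι ι ℝ} (hM : ∀ k, (M k).IsHermitian)
    (horth : ∀ k k', trace (M k * (M k')ᵀ) = if k = k' then 1 else 0) (t : κ → ℝ) :
    2 * (∑ k, t k ^ 2) / ‖C‖ ^ 2 ≤ t ⬝ᵥ (traceGram C⁻¹ M *ᵥ t) := by
  have hT : (∑ k, t k • M k).IsHermitian :=
    isSelfAdjoint_sum _ fun k _ => (hM k).smul (.all (t k))
  rw [dotProduct_traceGram_mulVec, sum_sq_eq_trace_mul_transpose horth,
    ← conjTranspose_eq_transpose_of_trivial, hT.eq]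
  set T := ∑ k, t k • M k
  have key := sq_mul_trace_mul_self_le_trace_mul_mul_mul_mul (inv_nonneg.mpr (norm_nonneg C))
    hC.inv_norm_smul_one_le_inv hT
  calc 2 * (T * T).trace / ‖C‖ ^ 2 = 2 * (‖C‖⁻¹ ^ 2 * (T * T).trace) := by ring
    _ ≤ 2 * (T * C⁻¹ * T * C⁻¹).trace := by gcongr

lemma traceGram_inv_posDef {C : Matrix ι ι ℝ} (hC : C.PosDef)
    {M : κ → Matrix ι ι ℝ} (hM : ∀ k, (M k).IsHermitian)
    (horth : ∀ k k', trace (M k * (M k')ᵀ) = if k = k' then 1 else 0) :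
    (traceGram C⁻¹ M).PosDef := by
  have hMsymm : ∀ k, (M k).IsSymm := fun k => isHermitian_iff_isSymm.mp (hM k)
  refine .of_dotProduct_mulVec_pos
    (isHermitian_traceGram (isHermitian_iff_isSymm.mp hC.inv.isHermitian) hMsymm) fun t ht => ?_
  obtain ⟨k, hk⟩ := Function.ne_iff.mp ht
  have : Nontrivial (Matrix ι ι ℝ) :=
    nontrivial_of_ne (M k * (M k)ᵀ) 0 fun h => by simpa [h] using horth k k
  have hC₀ : 0 < ‖C‖ := norm_pos_iff.mpr hC.isUnit.ne_zero
  have ht₀ : 0 < ∑ k, t k ^ 2 :=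
    Finset.sum_pos' (fun _ _ => sq_nonneg _) ⟨k, Finset.mem_univ k, pow_two_pos_of_ne_zero hk⟩
  rw [star_trivial]
  exact (by positivity : (0 : ℝ) < 2 * (∑ k, t k ^ 2) / ‖C‖ ^ 2).trans_le
    (two_mul_sum_sq_div_norm_sq_le hC hM horth t)

end Matrix

theorem stmt11 {n K : ℕ} (C : Matrix (Fin n) (Fin n) ℝ) (hC : C.PosDef)
    (M : Fin K → Matrix (Fin n) (Fin n) ℝ) (hsym : ∀ k, (M k).IsHermitian)
    (horth : ∀ k k', Matrix.trace (M k * (M k')ᵀ) = if k = k' then 1 else 0) :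
    (∀ t : Fin K → ℝ,
        t ⬝ᵥ ((Matrix.of fun k k' => 2 * Matrix.trace (M k * C⁻¹ * M k' * C⁻¹)) *ᵥ t)
          ≥ 2 * (∑ i, (t i) ^ 2) / spNorm C ^ 2)
    ∧ (Matrix.of fun k k' => 2 * Matrix.trace (M k * C⁻¹ * M k' * C⁻¹)).PosDef :=
  -- `spNorm C` is definitionally `‖C‖` for the L2 operator norm on matrices.
  ⟨two_mul_sum_sq_div_norm_sq_le hC hsym horth, traceGram_inv_posDef hC hsym horth⟩
end

section
/- Let C and C_θ be real symmetric positive definite n×n matrices, set Δ = C − C_θ, and assume ‖C^{-1}‖_sp·‖Δ‖_sp < 1. Define B = C^{-1} + C^{-1}ΔC^{-1} = (I_n + C^{-1}Δ)C^{-1}. Then B is invertible, B^{-1} = C·Σ_{k=0}^∞ (−C^{-1}Δ)^k, and ‖C_θ^{-1/2}(B^{-1} − C_θ)C_θ^{-1/2}‖_F ≤ ‖C_θ^{-1}‖_sp · ‖Δ‖_F · ‖C^{-1}‖_sp‖Δ‖_sp / (1 − ‖C^{-1}‖_sp‖Δ‖_sp). -/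
open scoped ComplexOrder in
/-- The positive semidefinite square root of a positive semidefinite matrix
(the definition of `Matrix.PosSemidef.sqrt` in the older Mathlib, since removed). -/
noncomputable def Matrix.PosSemidef.sqrt {n 𝕜 : Type*} [Fintype n] [DecidableEq n] [RCLike 𝕜]
    {A : Matrix n n 𝕜} (hA : A.PosSemidef) : Matrix n n 𝕜 :=
  hA.1.eigenvectorUnitary.1 * Matrix.diagonal ((↑) ∘ (√·) ∘ hA.1.eigenvalues) *
  (star hA.1.eigenvectorUnitary : Matrix n n 𝕜)

open scoped Matrix.Norms.L2Operator Matrix ComplexOrder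

namespace Matrix

variable {ι 𝕜 : Type*} [Fintype ι] [DecidableEq ι] [RCLike 𝕜]

lemma PosSemidef.isHermitian_sqrt {A : Matrix ι ι 𝕜} (hA : A.PosSemidef) :
    hA.sqrt.IsHermitian := by
  simp only [IsHermitian, PosSemidef.sqrt, conjTranspose_mul, diagonal_conjTranspose,
    star_eq_conjTranspose, conjTranspose_conjTranspose, mul_assoc]
  congr 3
  funext i
  simp

lemma PosSemidef.sqrt_mul_self {A : Matrix ι ι 𝕜} (hA : A.PosSemidef) :
    hA.sqrt * hA.sqrt = A := by
  set U : Matrix ι ι 𝕜 := hA.1.eigenvectorUnitary.1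
  set D : Matrix ι ι 𝕜 := diagonal ((↑) ∘ (√·) ∘ hA.1.eigenvalues)
  have hUU : star U * U = 1 := Unitary.coe_star_mul_self _
  have hDD : D * D = diagonal ((↑) ∘ hA.1.eigenvalues) := by
    rw [diagonal_mul_diagonal]
    congr 1
    funext i
    simp [← RCLike.ofReal_mul, Real.mul_self_sqrt (hA.eigenvalues_nonneg i)]
  calc U * D * star U * (U * D * star U) = U * D * (star U * U) * D * star U := by
        simp only [mul_assoc]
    _ = U * (D * D) * star U := by rw [hUU, mul_one, mul_assoc U D D]
    _ = A := by rw [hDD]; exact hA.1.spectral_theorem.symm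

lemma IsHermitian.l2_opNorm_inv_mul_self {R : Matrix ι ι 𝕜} (hR : R.IsHermitian) :
    ‖R⁻¹‖ * ‖R⁻¹‖ = ‖(R * R)⁻¹‖ := by
  rw [← l2_opNorm_conjTranspose_mul_self, hR.inv.eq, mul_inv_rev]

lemma l2_opNorm_one_le : ‖(1 : Matrix ι ι 𝕜)‖ ≤ 1 := by
  rw [cstar_norm_def, map_one]
  exact ContinuousLinearMap.norm_id_le

lemma inv_one_add_eq_tsum {M : Matrix ι ι 𝕜} (hM : ‖M‖ < 1) :
    (1 + M)⁻¹ = ∑' k : ℕ, (-M) ^ k := by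
  refine inv_eq_right_inv ?_
  simpa using mul_neg_geom_series (-M) (by rwa [norm_neg])

lemma l2_opNorm_inv_one_add_le {M : Matrix ι ι 𝕜} (hM : ‖M‖ < 1) :
    ‖(1 + M)⁻¹‖ ≤ (1 - ‖M‖)⁻¹ := by
  have := tsum_geometric_le_of_norm_lt_one (-M) (by rwa [norm_neg])
  rw [inv_one_add_eq_tsum hM, ← norm_neg M]
  linarith [l2_opNorm_one_le (ι := ι) (𝕜 := 𝕜)]

variable {K : Type*} [Field K]

lemma inv_inv_add_inv_mul_sub_mul_inv {C Cθ : Matrix ι ι K} (hC : IsUnit C.det) :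
    (C⁻¹ + C⁻¹ * (C - Cθ) * C⁻¹)⁻¹ = C * (1 + C⁻¹ * (C - Cθ))⁻¹ := by
  rw [← one_add_mul, mul_inv_rev, nonsing_inv_nonsing_inv C hC]

lemma mul_inv_one_add_sub_of_mul_eq {C Cθ M : Matrix ι ι K} (hCM : C * M = C - Cθ)
    (hM : IsUnit (1 + M).det) :
    C * (1 + M)⁻¹ - Cθ = (C - Cθ) * M * (1 + M)⁻¹ :=
  calc C * (1 + M)⁻¹ - Cθ = (C - Cθ * (1 + M)) * (1 + M)⁻¹ := by
        rw [sub_mul, mul_assoc Cθ, mul_nonsing_inv _ hM, mul_one]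
    _ = (C * M - Cθ * M) * (1 + M)⁻¹ := by rw [hCM]; noncomm_ring
    _ = (C - Cθ) * M * (1 + M)⁻¹ := by rw [← sub_mul]

end Matrix

section Frobenius

variable {n : ℕ}

lemma spNorm_eq_l2_opNorm (A : Matrix (Fin n) (Fin n) ℝ) : spNorm A = ‖A‖ := rfl

lemma frobNorm_nonneg (A : Matrix (Fin n) (Fin n) ℝ) : 0 ≤ frobNorm A :=
  Real.sqrt_nonneg _

lemma frobNorm_transpose (A : Matrix (Fin n) (Fin n) ℝ) : frobNorm Aᵀ = frobNorm A := by
  rw [frobNorm, frobNorm, Finset.sum_comm]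
  rfl

lemma frobNorm_mul_le_l2_opNorm_mul (X Y : Matrix (Fin n) (Fin n) ℝ) :
    frobNorm (X * Y) ≤ ‖X‖ * frobNorm Y := by
  -- the `j`-th column of `X * Y` is `X` applied to the `j`-th column of `Y`
  have hcol (j : Fin n) : ∑ i, (X * Y) i j ^ 2 ≤ ‖X‖ ^ 2 * ∑ i, Y i j ^ 2 := by
    have := pow_le_pow_left₀ (norm_nonneg _)
      (Matrix.l2_opNorm_mulVec X (WithLp.toLp 2 (fun i => Y i j))) 2
    simpa [mul_pow, EuclideanSpace.real_norm_sq_eq, Matrix.mul_apply, Matrix.mulVec,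
      dotProduct] using this
  rw [frobNorm, frobNorm, ← Real.sqrt_sq (norm_nonneg X), ← Real.sqrt_mul (sq_nonneg _),
    Finset.sum_comm, Finset.sum_comm (f := fun i j => Y i j ^ 2), Finset.mul_sum]
  exact Real.sqrt_le_sqrt (Finset.sum_le_sum fun j _ => hcol j)

lemma frobNorm_mul_le_mul_l2_opNorm (Y Z : Matrix (Fin n) (Fin n) ℝ) :
    frobNorm (Y * Z) ≤ frobNorm Y * ‖Z‖ := by
  have h := frobNorm_mul_le_l2_opNorm_mul Zᵀ Yᵀ
  rwa [← Matrix.transpose_mul, frobNorm_transpose, frobNorm_transpose,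
    ← Matrix.conjTranspose_eq_transpose_of_trivial, Matrix.l2_opNorm_conjTranspose,
    mul_comm] at h

lemma frobNorm_mul_mul_le (X Y Z : Matrix (Fin n) (Fin n) ℝ) :
    frobNorm (X * Y * Z) ≤ ‖X‖ * frobNorm Y * ‖Z‖ :=
  (frobNorm_mul_le_mul_l2_opNorm _ Z).trans <|
    mul_le_mul_of_nonneg_right (frobNorm_mul_le_l2_opNorm_mul X Y) (norm_nonneg Z)

lemma frobNorm_mul_inv_one_add_le (S Δ : Matrix (Fin n) (Fin n) ℝ) {M : Matrix (Fin n) (Fin n) ℝ}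
    (hM : ‖M‖ < 1) :
    frobNorm (S * (Δ * M * (1 + M)⁻¹) * S) ≤ ‖S‖ * ‖S‖ * frobNorm Δ * (‖M‖ / (1 - ‖M‖)) :=
  calc frobNorm (S * (Δ * M * (1 + M)⁻¹) * S)
      = frobNorm (S * Δ * (M * (1 + M)⁻¹ * S)) := by simp only [mul_assoc]
    _ ≤ ‖S‖ * frobNorm Δ * ‖M * (1 + M)⁻¹ * S‖ := frobNorm_mul_mul_le _ _ _
    _ ≤ ‖S‖ * frobNorm Δ * (‖M‖ * (1 - ‖M‖)⁻¹ * ‖S‖) := by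
        refine mul_le_mul_of_nonneg_left ((norm_mul₃_le ..).trans ?_)
          (mul_nonneg (norm_nonneg _) (frobNorm_nonneg _))
        gcongr
        exact Matrix.l2_opNorm_inv_one_add_le hM
    _ = ‖S‖ * ‖S‖ * frobNorm Δ * (‖M‖ / (1 - ‖M‖)) := by ring

end Frobenius

theorem stmt12 {n : ℕ} (C Cθ : Matrix (Fin n) (Fin n) ℝ) (hC : C.PosDef) (hCθ : Cθ.PosDef)
    (h : spNorm C⁻¹ * spNorm (C - Cθ) < 1) :
    IsUnit (C⁻¹ + C⁻¹ * (C - Cθ) * C⁻¹)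
    ∧ (C⁻¹ + C⁻¹ * (C - Cθ) * C⁻¹)⁻¹ = C * ∑' k : ℕ, (-(C⁻¹ * (C - Cθ))) ^ k
    ∧ frobNorm ((hCθ.posSemidef.sqrt)⁻¹ *
          ((C⁻¹ + C⁻¹ * (C - Cθ) * C⁻¹)⁻¹ - Cθ) * (hCθ.posSemidef.sqrt)⁻¹) ≤
        spNorm Cθ⁻¹ * frobNorm (C - Cθ) * (spNorm C⁻¹ * spNorm (C - Cθ)) /
          (1 - spNorm C⁻¹ * spNorm (C - Cθ)) := by
  simp only [spNorm_eq_l2_opNorm] at h ⊢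
  set M := C⁻¹ * (C - Cθ)
  set S := (hCθ.posSemidef.sqrt)⁻¹
  have hCdet : IsUnit C.det := C.isUnit_iff_isUnit_det.mp hC.isUnit
  have hMr : ‖M‖ ≤ ‖C⁻¹‖ * ‖C - Cθ‖ := Matrix.l2_opNorm_mul _ _
  have hM : ‖M‖ < 1 := hMr.trans_lt h
  have hMunit : IsUnit (1 + M) := by
    simpa using isUnit_one_sub_of_norm_lt_one (x := -M) (by rwa [norm_neg])
  have hB := Matrix.inv_inv_add_inv_mul_sub_mul_inv (Cθ := Cθ) hCdet
  refine ⟨?_, by rw [hB, Matrix.inv_one_add_eq_tsum hM], ?_⟩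
  · rw [← one_add_mul]
    exact hMunit.mul (Matrix.isUnit_nonsing_inv_iff.mpr hC.isUnit)
  have hSS : ‖S‖ * ‖S‖ = ‖Cθ⁻¹‖ := by
    rw [(Matrix.PosSemidef.isHermitian_sqrt _).l2_opNorm_inv_mul_self,
      Matrix.PosSemidef.sqrt_mul_self]
  rw [hB, Matrix.mul_inv_one_add_sub_of_mul_eq (C.mul_nonsing_inv_cancel_left _ hCdet)
    ((Matrix.isUnit_iff_isUnit_det _).mp hMunit)]
  calc frobNorm (S * ((C - Cθ) * M * (1 + M)⁻¹) * S)
      ≤ ‖S‖ * ‖S‖ * frobNorm (C - Cθ) * (‖M‖ / (1 - ‖M‖)) := frobNorm_mul_inv_one_add_le _ _ hM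
    _ ≤ ‖Cθ⁻¹‖ * frobNorm (C - Cθ) * (‖C⁻¹‖ * ‖C - Cθ‖) / (1 - ‖C⁻¹‖ * ‖C - Cθ‖) := by
        rw [hSS, mul_div_assoc]
        refine mul_le_mul_of_nonneg_left ?_ (mul_nonneg (norm_nonneg _) (frobNorm_nonneg _))
        gcongr
end

section
/- Let h : [0,1]×[−π,π] → ℝ be a bounded measurable function and let n ≥ 1. Define the complex n×n matrix θ(h) by θ(h)_{j+1,j'+1} = ∫_{−π}^{π} exp(i(j−j')x)·h(min(j,j')/n, x) dx for j,j' = 0,…,n−1. Then ‖θ(h)‖_F² ≤ 12π²·n·‖h‖_∞², where ‖h‖_∞ is the supremum norm of h. -/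
/-!
Fix `m`. The entries with `min j j' = m` are, up to the factor `2π`, Fourier coefficients of
`x ↦ h (m / n) x` on `(-π, π]` with pairwise distinct indices `j - j'`, so by Bessel's inequality
(Parseval on `L²(-π, π]`) their squared moduli sum to at most `2π ∫ |h (m / n) x|² ≤ 4π² D²`.
Every entry lies either in the row part `j ≤ j'` of row `j` (where the minimum is `j`) or in the
column part `j' < j` of column `j'`: `2n` such families, hence the bound `8π² n D² ≤ 12π² n D²`.
-/

open Real MeasureTheory Complex

lemma integral_exp_mul_eq_fourierCoeffOn (f : ℝ → ℂ) (k : ℤ) :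
    ∫ x in (-π)..π, exp (I * k * x) * f x
      = 2 * π * fourierCoeffOn (neg_lt_self pi_pos) f (-k) := by
  have h2π : (2 * π : ℂ) ≠ 0 := by exact_mod_cast (by positivity : (2 * π : ℝ) ≠ 0)
  rw [fourierCoeffOn_eq_integral, Complex.real_smul, ← mul_assoc]
  simp only [fourier_coe_apply, neg_neg, sub_neg_eq_add, smul_eq_mul]
  push_cast
  rw [show (π : ℂ) + π = 2 * π by ring, mul_one_div_cancel h2π, one_mul]
  congr 1 with x
  congr 2
  field_simp

theorem sum_sq_norm_integral_exp_mul_le {f : ℝ → ℂ}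
    (hf : MemLp f 2 (volume.restrict (Set.Ioc (-π) π))) (S : Finset ℤ) :
    ∑ k ∈ S, ‖∫ x in (-π)..π, exp (I * k * x) * f x‖ ^ 2
      ≤ 2 * π * ∫ x in (-π)..π, ‖f x‖ ^ 2 := by
  have hParseval :=
    ((Equiv.neg ℤ).hasSum_iff).mpr (hasSum_sq_fourierCoeffOn (neg_lt_self pi_pos) hf)
  calc ∑ k ∈ S, ‖∫ x in (-π)..π, exp (I * k * x) * f x‖ ^ 2
      = (2 * π) ^ 2 * ∑ k ∈ S, ‖fourierCoeffOn (neg_lt_self pi_pos) f (-k)‖ ^ 2 := by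
        simp only [integral_exp_mul_eq_fourierCoeffOn, Finset.mul_sum, norm_mul, mul_pow]
        norm_cast
        simp [abs_of_pos pi_pos]
    _ ≤ (2 * π) ^ 2 * ((π - -π)⁻¹ • ∫ x in (-π)..π, ‖f x‖ ^ 2) := by
        gcongr
        exact sum_le_hasSum S (fun _ _ => sq_nonneg _) hParseval
    _ = 2 * π * ∫ x in (-π)..π, ‖f x‖ ^ 2 := by
        rw [smul_eq_mul]; field_simp; ring

theorem sum_sq_norm_integral_exp_mul_le_of_norm_le {f : ℝ → ℂ}
    (hf : AEStronglyMeasurable f (volume.restrict (Set.Ioc (-π) π))) {D : ℝ}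
    (hD : ∀ x ∈ Set.Ioc (-π) π, ‖f x‖ ≤ D) (S : Finset ℤ) :
    ∑ k ∈ S, ‖∫ x in (-π)..π, exp (I * k * x) * f x‖ ^ 2 ≤ 4 * π ^ 2 * D ^ 2 := by
  have hL2 : MemLp f 2 (volume.restrict (Set.Ioc (-π) π)) :=
    MemLp.of_bound hf D ((ae_restrict_iff' measurableSet_Ioc).2 (ae_of_all _ hD))
  have hsq : ∫ x in (-π)..π, ‖f x‖ ^ 2 ≤ D ^ 2 * (2 * π) := by
    refine (le_abs_self _).trans ?_
    have := intervalIntegral.norm_integral_le_of_norm_le_const (a := -π) (b := π)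
      (f := fun x => ‖f x‖ ^ 2) (C := D ^ 2) fun x hx => ?_
    · simpa [abs_of_pos (by positivity : 0 < π + π), two_mul] using this
    · rw [Set.uIoc_of_le (by linarith [pi_pos])] at hx
      simpa using pow_le_pow_left₀ (norm_nonneg _) (hD x hx) 2
  calc _ ≤ 2 * π * ∫ x in (-π)..π, ‖f x‖ ^ 2 := sum_sq_norm_integral_exp_mul_le hL2 S
    _ ≤ 2 * π * (D ^ 2 * (2 * π)) := by gcongr
    _ = 4 * π ^ 2 * D ^ 2 := by ring

theorem Fin.sum_sum_apply_min_sub_le {n : ℕ} (a : ℕ → ℤ → ℝ) {B : ℝ}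
    (hB : ∀ m < n, ∀ S : Finset ℤ, ∑ k ∈ S, a m k ≤ B) :
    ∑ j : Fin n, ∑ j' : Fin n, a (min (j : ℕ) j') ((j : ℤ) - j') ≤ 2 * n * B := by
  have hrow (j : Fin n) :
      ∑ j' ∈ {j' : Fin n | (j : ℕ) ≤ j'}, a (min (j : ℕ) j') ((j : ℤ) - j') ≤ B :=
    calc _ = ∑ j' ∈ {j' : Fin n | (j : ℕ) ≤ j'}, a j ((j : ℤ) - j') :=
          Finset.sum_congr rfl fun j' hj' => by rw [min_eq_left (Finset.mem_filter.1 hj').2]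
      _ = ∑ k ∈ ({j' | (j : ℕ) ≤ j'} : Finset (Fin n)).image (fun j' : Fin n => (j : ℤ) - j'),
            a j k :=
          (Finset.sum_image fun _ _ _ _ _ => Fin.ext (by omega)).symm
      _ ≤ B := hB j j.2 _
  have hcol (j' : Fin n) :
      ∑ j ∈ {j : Fin n | (j' : ℕ) < j}, a (min (j : ℕ) j') ((j : ℤ) - j') ≤ B :=
    calc _ = ∑ j ∈ {j : Fin n | (j' : ℕ) < j}, a j' ((j : ℤ) - j') :=
          Finset.sum_congr rfl fun j hj => by rw [min_eq_right (Finset.mem_filter.1 hj).2.le]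
      _ = ∑ k ∈ ({j | (j' : ℕ) < j} : Finset (Fin n)).image (fun j : Fin n => (j : ℤ) - j'),
            a j' k :=
          (Finset.sum_image fun _ _ _ _ _ => Fin.ext (by omega)).symm
      _ ≤ B := hB j' j'.2 _
  have hsplit : ∑ j : Fin n, ∑ j' : Fin n, a (min (j : ℕ) j') ((j : ℤ) - j')
      = ∑ j : Fin n, ∑ j' ∈ {j' : Fin n | (j : ℕ) ≤ j'}, a (min (j : ℕ) j') ((j : ℤ) - j')
        + ∑ j' : Fin n, ∑ j ∈ {j : Fin n | (j' : ℕ) < j}, a (min (j : ℕ) j') ((j : ℤ) - j') := by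
    have hswap :
        ∑ j : Fin n, ∑ j' ∈ {j' : Fin n | ¬ (j : ℕ) ≤ j'}, a (min (j : ℕ) j') ((j : ℤ) - j')
          = ∑ j' : Fin n, ∑ j ∈ {j : Fin n | (j' : ℕ) < j}, a (min (j : ℕ) j') ((j : ℤ) - j') :=
      Finset.sum_comm' fun j j' => by simp
    rw [← hswap, ← Finset.sum_add_distrib]
    exact Finset.sum_congr rfl fun j _ => (Finset.sum_filter_add_sum_filter_not _ _ _).symm
  rw [hsplit]
  calc _ ≤ ∑ _j : Fin n, B + ∑ _j' : Fin n, B := by gcongr with j _ j' _; exacts [hrow j, hcol j']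
    _ = 2 * n * B := by simp; ring

theorem stmt15_general {n : ℕ} (h : ℝ → ℝ → ℝ) (D : ℝ)
    (hmeas : Measurable (Function.uncurry h))
    (hbd : ∀ t ∈ Set.Icc (0 : ℝ) 1, ∀ x ∈ Set.Icc (-π) π, |h t x| ≤ D) :
    ∑ j : Fin n, ∑ j' : Fin n,
        ‖∫ x in (-π)..π,
          Complex.exp (Complex.I * ((j.1 : ℂ) - (j'.1 : ℂ)) * (x : ℂ)) *
            ((h (((min j.1 j'.1 : ℕ) : ℝ) / n) x : ℝ) : ℂ)‖ ^ 2
      ≤ 12 * π ^ 2 * n * D ^ 2 := by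
  have hrow (m : ℕ) (hm : m < n) (S : Finset ℤ) :
      ∑ k ∈ S, ‖∫ x in (-π)..π, exp (I * k * x) * (h (m / n) x : ℂ)‖ ^ 2
        ≤ 4 * π ^ 2 * D ^ 2 := by
    refine sum_sq_norm_integral_exp_mul_le_of_norm_le ?_ (fun x hx => ?_) S
    · exact (measurable_ofReal.comp (hmeas.comp measurable_prodMk_left)).aestronglyMeasurable
    · have hmn : (m / n : ℝ) ∈ Set.Icc (0 : ℝ) 1 :=
        ⟨by positivity, div_le_one_of_le₀ (by exact_mod_cast hm.le) (Nat.cast_nonneg n)⟩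
      simpa using hbd _ hmn x (Set.Ioc_subset_Icc_self hx)
  calc _ = ∑ j : Fin n, ∑ j' : Fin n,
        (fun (m : ℕ) (k : ℤ) => ‖∫ x in (-π)..π, exp (I * k * x) * (h (m / n) x : ℂ)‖ ^ 2)
          (min (j : ℕ) j') ((j : ℤ) - j') := by push_cast; rfl
    _ ≤ 2 * n * (4 * π ^ 2 * D ^ 2) := Fin.sum_sum_apply_min_sub_le _ hrow
    _ ≤ 12 * π ^ 2 * n * D ^ 2 := by
        linarith [show 0 ≤ π ^ 2 * n * D ^ 2 by positivity]

theorem stmt15 {n : ℕ} (hn : 1 ≤ n) (h : ℝ → ℝ → ℝ) (D : ℝ)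
    (hmeas : Measurable (Function.uncurry h))
    (hbd : ∀ t ∈ Set.Icc (0 : ℝ) 1, ∀ x ∈ Set.Icc (-π) π, |h t x| ≤ D) :
    ∑ j : Fin n, ∑ j' : Fin n,
        ‖∫ x in (-π)..π,
          Complex.exp (Complex.I * ((j.1 : ℂ) - (j'.1 : ℂ)) * (x : ℂ)) *
            ((h (((min j.1 j'.1 : ℕ) : ℝ) / n) x : ℝ) : ℂ)‖ ^ 2
      ≤ 12 * π ^ 2 * n * D ^ 2 :=
  stmt15_general h D hmeas hbd
end
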